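/- Let $R$ be a finite ring, let $M_1,\dots,M_n$ be pairwise non-isomorphic indecomposable finite $R$-modules with $\mathrm{Hom}_R(M_1,M_j)=0$ for all $j\neq 1$ and $\mathrm{End}_R(M_1)=E_1$ a field, and set $M=M_1^{a}\oplus M'$ with $M'=M_2^{a_2}\oplus\cdots\oplus M_n^{a_n}$. Then $\mathrm{Aut}_R(M)\cong(\mathrm{GL}_a(E_1)\times\mathrm{Aut}_R(M'))\ltimes\mathrm{Hom}_R(M',M_1^{a})$, where $(g_1,g_2)$ acts on $A\in\mathrm{Hom}_R(M',M_1^a)$ by $g_1 A g_2^{-1}$. -/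
import Mathlib

noncomputable section

/-- A square matrix of endomorphisms of `M₁` acting on `M₁^a`. -/
def matApply {R M₁ : Type*} [Ring R] [AddCommGroup M₁] [Module R M₁] {a : ℕ}
    (g : Matrix (Fin a) (Fin a) (Module.End R M₁)) :
    (Fin a → M₁) →ₗ[R] (Fin a → M₁) where
  toFun v i := ∑ j, g i j (v j)
  map_add' x y := by
    funext i
    simp [map_add, Finset.sum_add_distrib]
  map_smul' c x := by
    funext i
    simp [Finset.smul_sum]

namespace AutSemidirectAux

variable {R M₁ M' : Type*} [Ring R] [AddCommGroup M₁] [Module R M₁]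
  [AddCommGroup M'] [Module R M'] {a : ℕ}

lemma matApply_apply (g : Matrix (Fin a) (Fin a) (Module.End R M₁)) (v : Fin a → M₁)
    (i : Fin a) : matApply g v i = ∑ j, g i j (v j) := rfl

lemma matApply_one : matApply (1 : Matrix (Fin a) (Fin a) (Module.End R M₁)) = LinearMap.id := by
  refine LinearMap.ext fun v => funext fun i => ?_
  show ∑ j, (1 : Matrix (Fin a) (Fin a) (Module.End R M₁)) i j (v j) = v i
  rw [Finset.sum_eq_single i]
  · simp [Matrix.one_apply]
  · intro j _ hj
    rw [Matrix.one_apply_ne (Ne.symm hj)]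
    rfl
  · simp

lemma matApply_mul (g h : Matrix (Fin a) (Fin a) (Module.End R M₁)) :
    matApply (g * h) = (matApply g).comp (matApply h) := by
  refine LinearMap.ext fun v => funext fun i => ?_
  show ∑ j, (g * h) i j (v j) = ∑ k, g i k (matApply h v k)
  calc ∑ j, (g * h) i j (v j) = ∑ j, ∑ k, g i k (h k j (v j)) := by
        simp [Matrix.mul_apply, LinearMap.sum_apply, Module.End.mul_apply]
    _ = ∑ k, ∑ j, g i k (h k j (v j)) := Finset.sum_comm
    _ = ∑ k, g i k (matApply h v k) := by
        refine Finset.sum_congr rfl fun k _ => ?_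
        rw [matApply_apply, map_sum]

lemma matApply_unit_cancel (g : (Matrix (Fin a) (Fin a) (Module.End R M₁))ˣ)
    (x : Fin a → M₁) : matApply g.val (matApply ((g⁻¹).val) x) = x := by
  have h : matApply (g.val * (g⁻¹).val)
      = matApply (1 : Matrix (Fin a) (Fin a) (Module.End R M₁)) := by
    rw [Units.mul_inv]
  rw [matApply_mul, matApply_one] at h
  exact DFunLike.congr_fun h x

lemma matApply_unit_cancel' (g : (Matrix (Fin a) (Fin a) (Module.End R M₁))ˣ)
    (x : Fin a → M₁) : matApply ((g⁻¹).val) (matApply g.val x) = x := by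
  have h : matApply ((g⁻¹).val * g.val)
      = matApply (1 : Matrix (Fin a) (Fin a) (Module.End R M₁)) := by
    rw [Units.inv_mul]
  rw [matApply_mul, matApply_one] at h
  exact DFunLike.congr_fun h x

/-- Matrix of an endomorphism of `M₁^a`. -/
def toMat (f : (Fin a → M₁) →ₗ[R] (Fin a → M₁)) :
    Matrix (Fin a) (Fin a) (Module.End R M₁) :=
  fun i j => (LinearMap.proj i).comp (f.comp (LinearMap.single R (fun _ => M₁) j))

lemma matApply_toMat (f : (Fin a → M₁) →ₗ[R] (Fin a → M₁)) : matApply (toMat f) = f := by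
  refine LinearMap.ext fun v => funext fun i => ?_
  show ∑ j, f (Pi.single j (v j)) i = f v i
  rw [← Finset.sum_apply, ← map_sum, Finset.univ_sum_single]

lemma toMat_matApply (g : Matrix (Fin a) (Fin a) (Module.End R M₁)) :
    toMat (matApply g : (Fin a → M₁) →ₗ[R] (Fin a → M₁)) = g := by
  funext i j
  refine LinearMap.ext fun x => ?_
  show ∑ k, g i k ((Pi.single j x : Fin a → M₁) k) = g i j x
  rw [Finset.sum_eq_single j]
  · simp
  · intro k _ hk
    have hsk : (Pi.single j x : Fin a → M₁) k = 0 := by simp [Pi.single_eq_of_ne hk]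
    rw [hsk, map_zero]
  · simp

lemma toMat_comp (f g : (Fin a → M₁) →ₗ[R] (Fin a → M₁)) :
    toMat (f ∘ₗ g) = toMat f * toMat g := by
  have h : f ∘ₗ g = matApply (toMat f * toMat g) := by
    rw [matApply_mul, matApply_toMat, matApply_toMat]
  rw [h, toMat_matApply]

lemma toMat_id : toMat (LinearMap.id : (Fin a → M₁) →ₗ[R] (Fin a → M₁)) = 1 := by
  rw [← matApply_one, toMat_matApply]

/-- The block-triangular automorphism built from `(g₁, g₂, A)`. -/
def shear (g₁ : (Matrix (Fin a) (Fin a) (Module.End R M₁))ˣ) (g₂ : M' ≃ₗ[R] M')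
    (A : M' →ₗ[R] (Fin a → M₁)) : ((Fin a → M₁) × M') ≃ₗ[R] ((Fin a → M₁) × M') :=
  LinearEquiv.ofLinear
    (LinearMap.prod
      (matApply g₁.val ∘ₗ LinearMap.fst R _ _ + A ∘ₗ g₂.toLinearMap ∘ₗ LinearMap.snd R _ _)
      (g₂.toLinearMap ∘ₗ LinearMap.snd R _ _))
    (LinearMap.prod
      (matApply ((g₁⁻¹).val) ∘ₗ (LinearMap.fst R _ _ - A ∘ₗ LinearMap.snd R _ _))
      (g₂.symm.toLinearMap ∘ₗ LinearMap.snd R _ _))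
    (by
      refine LinearMap.ext fun vm => ?_
      obtain ⟨v, m⟩ := vm
      show (matApply g₁.val (matApply ((g₁⁻¹).val) (v - A m))
            + A (g₂ (g₂.symm m)), g₂ (g₂.symm m)) = (v, m)
      rw [LinearEquiv.apply_symm_apply, matApply_unit_cancel]
      refine Prod.ext ?_ rfl
      show v - A m + A m = v
      abel)
    (by
      refine LinearMap.ext fun vm => ?_
      obtain ⟨v, m⟩ := vm
      show (matApply ((g₁⁻¹).val) (matApply g₁.val v + A (g₂ m) - A (g₂ m)),
            g₂.symm (g₂ m)) = (v, m)
      rw [LinearEquiv.symm_apply_apply, add_sub_cancel_right, matApply_unit_cancel']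
      )

lemma shear_apply (g₁ : (Matrix (Fin a) (Fin a) (Module.End R M₁))ˣ) (g₂ : M' ≃ₗ[R] M')
    (A : M' →ₗ[R] (Fin a → M₁)) (v : Fin a → M₁) (m : M') :
    shear g₁ g₂ A (v, m) = (matApply g₁.val v + A (g₂ m), g₂ m) := rfl

lemma shear_symm_apply (g₁ : (Matrix (Fin a) (Fin a) (Module.End R M₁))ˣ) (g₂ : M' ≃ₗ[R] M')
    (A : M' →ₗ[R] (Fin a → M₁)) (v : Fin a → M₁) (m : M') :
    (shear g₁ g₂ A).symm (v, m) = (matApply ((g₁⁻¹).val) (v - A m), g₂.symm m) := rfl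

variable (R) in
/-- Components of an endomorphism of `M₁^a × M'`. -/
def Bof (φ : ((Fin a → M₁) × M') ≃ₗ[R] ((Fin a → M₁) × M')) :
    (Fin a → M₁) →ₗ[R] (Fin a → M₁) :=
  LinearMap.fst R _ _ ∘ₗ φ.toLinearMap ∘ₗ LinearMap.inl R _ _

variable (R) in
def Aof (φ : ((Fin a → M₁) × M') ≃ₗ[R] ((Fin a → M₁) × M')) :
    M' →ₗ[R] (Fin a → M₁) :=
  LinearMap.fst R _ _ ∘ₗ φ.toLinearMap ∘ₗ LinearMap.inr R _ _

variable (R) in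
def Dof (φ : ((Fin a → M₁) × M') ≃ₗ[R] ((Fin a → M₁) × M')) :
    M' →ₗ[R] M' :=
  LinearMap.snd R _ _ ∘ₗ φ.toLinearMap ∘ₗ LinearMap.inr R _ _

lemma phi_apply (hz : ∀ f : (Fin a → M₁) →ₗ[R] M', f = 0)
    (φ : ((Fin a → M₁) × M') ≃ₗ[R] ((Fin a → M₁) × M')) (v : Fin a → M₁) (m : M') :
    φ (v, m) = (Bof R φ v + Aof R φ m, Dof R φ m) := by
  have hsplit : (v, m) = ((v, 0) : (Fin a → M₁) × M') + (0, m) := by simp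
  have hC : (LinearMap.snd R _ M' ∘ₗ φ.toLinearMap ∘ₗ LinearMap.inl R (Fin a → M₁) M') = 0 :=
    hz _
  have hC' : (φ (v, 0)).2 = 0 := DFunLike.congr_fun hC v
  have h1 : φ (v, 0) = (Bof R φ v, 0) := by
    refine Prod.ext rfl hC'
  have h2 : φ (0, m) = (Aof R φ m, Dof R φ m) := rfl
  rw [hsplit, map_add, h1, h2]
  simp

lemma B_cancel (hz : ∀ f : (Fin a → M₁) →ₗ[R] M', f = 0)
    (φ : ((Fin a → M₁) × M') ≃ₗ[R] ((Fin a → M₁) × M')) (v : Fin a → M₁) :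
    Bof R φ.symm (Bof R φ v) = v := by
  have h1 : φ (v, 0) = (Bof R φ v, 0) := by
    rw [phi_apply hz φ v 0]; simp
  have h2 : φ.symm (Bof R φ v, 0) = (Bof R φ.symm (Bof R φ v), 0) := by
    rw [phi_apply hz φ.symm (Bof R φ v) 0]; simp
  have h3 : φ.symm (φ (v, 0)) = (v, 0) := φ.symm_apply_apply _
  rw [h1, h2] at h3
  exact congrArg Prod.fst h3

lemma D_cancel (hz : ∀ f : (Fin a → M₁) →ₗ[R] M', f = 0)
    (φ : ((Fin a → M₁) × M') ≃ₗ[R] ((Fin a → M₁) × M')) (m : M') :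
    Dof R φ.symm (Dof R φ m) = m := by
  have h1 : φ (0, m) = (Aof R φ m, Dof R φ m) := rfl
  have h2 := phi_apply hz φ.symm (Aof R φ m) (Dof R φ m)
  have h3 : φ.symm (φ (0, m)) = (0, m) := φ.symm_apply_apply _
  rw [h1, h2] at h3
  exact congrArg Prod.snd h3

/-- Extract the triangular data from an automorphism. -/
def extract (hz : ∀ f : (Fin a → M₁) →ₗ[R] M', f = 0)
    (φ : ((Fin a → M₁) × M') ≃ₗ[R] ((Fin a → M₁) × M')) :
    ((Matrix (Fin a) (Fin a) (Module.End R M₁))ˣ × (M' ≃ₗ[R] M'))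
      × (M' →ₗ[R] (Fin a → M₁)) :=
  ((⟨toMat (Bof R φ), toMat (Bof R φ.symm),
      by
        have h : Bof R φ ∘ₗ Bof R φ.symm = LinearMap.id := LinearMap.ext fun v => by
          have := B_cancel hz φ.symm v
          rwa [LinearEquiv.symm_symm] at this
        rw [← toMat_comp, h, toMat_id],
      by
        have h : Bof R φ.symm ∘ₗ Bof R φ = LinearMap.id := LinearMap.ext fun v =>
          B_cancel hz φ v
        rw [← toMat_comp, h, toMat_id]⟩,
    LinearEquiv.ofLinear (Dof R φ) (Dof R φ.symm)
      (LinearMap.ext fun m => by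
        have := D_cancel hz φ.symm m
        rwa [LinearEquiv.symm_symm] at this)
      (LinearMap.ext fun m => D_cancel hz φ m)),
  Aof R φ ∘ₗ Dof R φ.symm)

end AutSemidirectAux

open AutSemidirectAux in
/-- if `Hom_R(M₁, M') = 0` and `E₁ = End_R(M₁)` is a field, then for
`M = M₁^a ⊕ M'` the automorphism group of `M` is the semidirect product
`(GL_a(E₁) × Aut_R(M')) ⋉ Hom_R(M', M₁^a)`, where `(g₁, g₂)` acts on `A` by
`g₁ A g₂⁻¹`.  (Here `GL_a(E₁)` is realised as the unit group of the `a × a` matrix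
ring over `E₁`, and the semidirect product structure is expressed by the displayed
multiplication rule for the bijection `Θ`.) -/
theorem aut_of_sum_iso_semidirect_product
    {R : Type*} [Ring R] [Finite R]
    {M₁ M' : Type*} [AddCommGroup M₁] [Module R M₁] [Finite M₁]
    [AddCommGroup M'] [Module R M'] [Finite M'] (a : ℕ)
    (hhom : ∀ f : M₁ →ₗ[R] M', f = 0)
    (hcomm : ∀ x y : Module.End R M₁, x * y = y * x)
    (hfield : ∀ x : Module.End R M₁, x ≠ 0 → IsUnit x) :
    ∃ Θ : ((Matrix (Fin a) (Fin a) (Module.End R M₁))ˣ × (M' ≃ₗ[R] M'))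
            × (M' →ₗ[R] (Fin a → M₁))
          ≃ ((((Fin a → M₁) × M') ≃ₗ[R] ((Fin a → M₁) × M'))),
      ∀ (g₁ g₁' : (Matrix (Fin a) (Fin a) (Module.End R M₁))ˣ)
        (g₂ g₂' : M' ≃ₗ[R] M') (A A' : M' →ₗ[R] (Fin a → M₁)),
        Θ ((g₁, g₂), A) * Θ ((g₁', g₂'), A')
          = Θ ((g₁ * g₁', g₂ * g₂'),
              A + (matApply g₁.val
                    ∘ₗ A' ∘ₗ (g₂⁻¹ : M' ≃ₗ[R] M').toLinearMap)) := by
  classical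
  have hz : ∀ f : (Fin a → M₁) →ₗ[R] M', f = 0 := by
    intro f
    refine LinearMap.ext fun v => ?_
    have hv : v = ∑ j, Pi.single j (v j) := (Finset.univ_sum_single v).symm
    rw [hv, map_sum]
    refine Finset.sum_eq_zero fun j _ => ?_
    have h := hhom (f ∘ₗ LinearMap.single R (fun _ => M₁) j)
    have := DFunLike.congr_fun h (v j)
    simpa using this
  refine ⟨⟨fun p => shear p.1.1 p.1.2 p.2, extract hz, ?_, ?_⟩, ?_⟩
  · -- left inverse
    rintro ⟨⟨g₁, g₂⟩, A⟩
    have hB : Bof R (shear g₁ g₂ A) = matApply g₁.val := by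
      refine LinearMap.ext fun v => ?_
      show (shear g₁ g₂ A (v, 0)).1 = _
      rw [shear_apply]; simp
    have hD : Dof R (shear g₁ g₂ A) = g₂.toLinearMap := by
      refine LinearMap.ext fun m => ?_
      show (shear g₁ g₂ A (0, m)).2 = _
      rw [shear_apply]
      rfl
    have hDs : Dof R (shear g₁ g₂ A).symm = g₂.symm.toLinearMap := by
      refine LinearMap.ext fun m => ?_
      show ((shear g₁ g₂ A).symm (0, m)).2 = _
      rw [shear_symm_apply]
      rfl
    have hA : Aof R (shear g₁ g₂ A) = A ∘ₗ g₂.toLinearMap := by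
      refine LinearMap.ext fun m => ?_
      show (shear g₁ g₂ A (0, m)).1 = _
      rw [shear_apply]; simp
    refine Prod.ext (Prod.ext ?_ ?_) ?_
    · apply Units.ext
      show toMat (Bof R (shear g₁ g₂ A)) = g₁.val
      rw [hB, toMat_matApply]
    · refine LinearEquiv.ext fun m => ?_
      show Dof R (shear g₁ g₂ A) m = g₂ m
      rw [hD]; rfl
    · show Aof R (shear g₁ g₂ A) ∘ₗ Dof R (shear g₁ g₂ A).symm = A
      rw [hA, hDs]
      refine LinearMap.ext fun m => ?_
      simp
  · -- right inverse
    intro φ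
    refine LinearEquiv.ext fun vm => ?_
    obtain ⟨v, m⟩ := vm
    show shear _ _ _ (v, m) = φ (v, m)
    rw [shear_apply, phi_apply hz φ v m]
    refine Prod.ext ?_ rfl
    show matApply (toMat (Bof R φ)) v + (Aof R φ ∘ₗ Dof R φ.symm) (Dof R φ m)
        = Bof R φ v + Aof R φ m
    rw [matApply_toMat]
    congr 1
    show Aof R φ (Dof R φ.symm (Dof R φ m)) = Aof R φ m
    rw [D_cancel hz φ m]
  · -- multiplication rule
    intro g₁ g₁' g₂ g₂' A A'
    refine LinearEquiv.ext fun vm => ?_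
    obtain ⟨v, m⟩ := vm
    show shear g₁ g₂ A (shear g₁' g₂' A' (v, m)) = shear (g₁ * g₁') (g₂ * g₂') _ (v, m)
    rw [shear_apply, shear_apply, shear_apply]
    have hmul : ∀ x, (g₂ * g₂') x = g₂ (g₂' x) := fun _ => rfl
    have hinv : ∀ x, (g₂⁻¹ : M' ≃ₗ[R] M') x = g₂.symm x := fun _ => rfl
    refine Prod.ext ?_ rfl
    show matApply g₁.val (matApply g₁'.val v + A' (g₂' m)) + A (g₂ (g₂' m))
        = matApply ((g₁ * g₁').val) v
            + (A + matApply g₁.val ∘ₗ A' ∘ₗ (g₂⁻¹ : M' ≃ₗ[R] M').toLinearMap) ((g₂ * g₂') m)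
    rw [Units.val_mul, matApply_mul, map_add]
    simp only [LinearMap.add_apply, LinearMap.comp_apply, LinearMap.coe_comp,
      Function.comp_apply, LinearEquiv.coe_toLinearMap, hmul, hinv,
      LinearEquiv.symm_apply_apply]
    abel

end
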